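/- arXiv:quant-ph/0005106 — 3 statements merged into one kernel-verified Lean document; each statement's English description precedes it below -/
import Mathlib

section
/- Let m ≥ 1 and d be positive integers and let σ : {0,1}^m → Matrix (Fin d) (Fin d) ℂ assign to every m-bit string a density matrix. Let Δ = 2^{-2m} · ∑_{x₁, x₂ ∈ {0,1}^m} ‖σ_{x₁} − σ_{x₂}‖₁. Then there exists a fixed-point-free involution f : {0,1}^m → {0,1}^m (a perfect pairing of the 2^m strings) such that 2^{-m} · ∑_{x ∈ {0,1}^m} ‖σ_x − σ_{f(x)}‖₁ ≥ Δ. -/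
open Matrix BigOperators Kronecker
open scoped ComplexOrder

noncomputable section
open Classical

/-- The positive semidefinite square root of a matrix (junk value `0` if not PSD). -/
def msqrt {d : Type*} [Fintype d] [DecidableEq d] (A : Matrix d d ℂ) : Matrix d d ℂ :=
  if h : A.PosSemidef then
    (h.1.eigenvectorUnitary : Matrix d d ℂ) *
      diagonal ((↑) ∘ Real.sqrt ∘ h.1.eigenvalues) * (star h.1.eigenvectorUnitary : Matrix d d ℂ)
  else 0

/-- The trace norm `Tr √(AᴴA)` of a complex matrix. -/
def traceNorm {d : Type*} [Fintype d] [DecidableEq d] (A : Matrix d d ℂ) : ℝ :=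
  ((msqrt (Aᴴ * A)).trace).re

/-- `ρ` is a density matrix: positive semidefinite with trace `1`. -/
def IsDensityMatrix {d : Type*} [Fintype d] [DecidableEq d] (ρ : Matrix d d ℂ) : Prop :=
  ρ.PosSemidef ∧ ρ.trace = 1

/-- Von Neumann entropy, base 2 (junk value `0` if not Hermitian). -/
def vnEntropy {d : Type*} [Fintype d] [DecidableEq d] (ρ : Matrix d d ℂ) : ℝ :=
  if h : ρ.IsHermitian then -∑ i, (h.eigenvalues i) * Real.logb 2 (h.eigenvalues i) else 0

/-- The binary entropy function, base 2. -/
def binEntropy (p : ℝ) : ℝ := -p * Real.logb 2 p - (1 - p) * Real.logb 2 (1 - p)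

/-- Fidelity of two matrices: `(Tr √(√ρ₁ ρ₂ √ρ₁))²`. -/
def fidelity {d : Type*} [Fintype d] [DecidableEq d] (ρ₁ ρ₂ : Matrix d d ℂ) : ℝ :=
  (((msqrt (msqrt ρ₁ * ρ₂ * msqrt ρ₁)).trace).re) ^ 2

/-- Partial trace over the second tensor factor. -/
def ptraceSnd {m k : ℕ} (ρ : Matrix (Fin m × Fin k) (Fin m × Fin k) ℂ) :
    Matrix (Fin m) (Fin m) ℂ :=
  Matrix.of fun i j => ∑ l : Fin k, ρ (i, l) (j, l)

end

/-! The pairings are the translations `x ↦ x + c`, `c ≠ 0`, of the Boolean group `(ℤ/2)^m`: each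
is a fixed-point-free involution. Summing the within-pair distances over all `2^m` translations
counts every ordered pair `(x₁, x₂)` exactly once, and the zero translation contributes nothing,
so some nonzero translation is at least as good as the average `2^{-m} ∑ₓ₁ ∑ₓ₂ ‖σₓ₁ - σₓ₂‖₁`. -/

theorem re_trace_msqrt {d : Type*} [Fintype d] [DecidableEq d] {A : Matrix d d ℂ}
    (hA : A.PosSemidef) : (msqrt A).trace.re = ∑ i, √(hA.1.eigenvalues i) := by
  rw [msqrt, dif_pos hA, trace_mul_cycle, Unitary.star_mul_self_of_mem
    hA.1.eigenvectorUnitary.prop, one_mul, trace_diagonal, Complex.re_sum]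
  simp

theorem traceNorm_nonneg {d : Type*} [Fintype d] [DecidableEq d] (A : Matrix d d ℂ) :
    0 ≤ traceNorm A := by
  rw [traceNorm, re_trace_msqrt (posSemidef_conjTranspose_mul_self A)]
  exact Finset.sum_nonneg fun i _ => Real.sqrt_nonneg _

@[simp]
theorem traceNorm_zero {d : Type*} [Fintype d] [DecidableEq d] :
    traceNorm (0 : Matrix d d ℂ) = 0 := by
  have h0 : (0 : Matrix d d ℂ)ᴴ * 0 = 0 := by simp
  rw [traceNorm, h0, re_trace_msqrt PosSemidef.zero,
    (PosSemidef.zero (n := d) (R := ℂ)).1.eigenvalues_eq_zero_iff.mpr rfl]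
  simp

section Translation

variable {G : Type*} [AddGroup G] [Fintype G]

theorem sum_sum_add_eq_sum_sum (D : G → G → ℝ) :
    ∑ c, ∑ x, D x (x + c) = ∑ x, ∑ y, D x y := by
  rw [Finset.sum_comm]
  exact Finset.sum_congr rfl fun x _ => Fintype.sum_equiv (Equiv.addLeft x) _ _ fun _ => rfl

theorem exists_ne_zero_inv_card_mul_sum_sum_le [DecidableEq G] [Nontrivial G] (D : G → G → ℝ)
    (hD_nonneg : ∀ x y, 0 ≤ D x y) (hD_self : ∀ x, D x x = 0) :
    ∃ c ≠ 0, (Fintype.card G : ℝ)⁻¹ * ∑ x, ∑ y, D x y ≤ ∑ x, D x (x + c) := by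
  have hsum : ∑ c ∈ Finset.univ.erase 0, ∑ x, D x (x + c) = ∑ x, ∑ y, D x y := by
    rw [← sum_sum_add_eq_sum_sum, ← Finset.sum_erase_add _ _ (Finset.mem_univ 0)]
    simp [hD_self]
  set T := ∑ x, ∑ y, D x y
  have hT : 0 ≤ T := Finset.sum_nonneg fun x _ => Finset.sum_nonneg fun y _ => hD_nonneg x y
  obtain ⟨c, hc, hle⟩ := Finset.exists_le_of_sum_le
    Finset.univ_nontrivial.erase_nonempty (f := fun _ => (Fintype.card G : ℝ)⁻¹ * T)
    (g := fun c => ∑ x, D x (x + c)) <| by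
      rw [hsum, Finset.sum_const, Finset.card_erase_of_mem (Finset.mem_univ 0), Finset.card_univ,
        nsmul_eq_mul, Nat.cast_pred Fintype.card_pos, ← mul_assoc]
      refine mul_le_of_le_one_left hT ?_
      rw [sub_mul, mul_inv_cancel₀ (by positivity), one_mul]
      exact sub_le_self _ (by positivity)
  exact ⟨c, Finset.ne_of_mem_erase hc, hle⟩

end Translation

theorem exists_pairing_avg_dist_general (m d : ℕ) (hm : 1 ≤ m)
    (σ : (Fin m → Bool) → Matrix (Fin d) (Fin d) ℂ) :
    ∃ f : (Fin m → Bool) → (Fin m → Bool), Function.Involutive f ∧ (∀ x, f x ≠ x) ∧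
      ((2 : ℝ) ^ m)⁻¹ * ∑ x : Fin m → Bool, traceNorm (σ x - σ (f x)) ≥
        ((2 : ℝ) ^ (2 * m))⁻¹ *
          ∑ x₁ : Fin m → Bool, ∑ x₂ : Fin m → Bool, traceNorm (σ x₁ - σ x₂) := by
  -- `+` on `Fin m → Bool` is pointwise `xor`.
  have : Nonempty (Fin m) := ⟨⟨0, hm⟩⟩
  obtain ⟨c, hc, hle⟩ := exists_ne_zero_inv_card_mul_sum_sum_le (G := Fin m → Bool)
    (fun x y => traceNorm (σ x - σ y)) (fun _ _ => traceNorm_nonneg _) (by simp)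
  have hcc : c + c = 0 := funext fun i => BooleanRing.add_self (c i)
  refine ⟨(· + c), fun x => by simp only [add_assoc, hcc, add_zero], fun x => by simpa using hc, ?_⟩
  have hcard : (Fintype.card (Fin m → Bool) : ℝ) = 2 ^ m := by simp
  rw [hcard] at hle
  rw [ge_iff_le, pow_mul', sq, mul_inv, mul_assoc]
  exact mul_le_mul_of_nonneg_left hle (by positivity)

/-- There is a perfect pairing (a fixed-point-free involution) of the `2^m` strings
whose average within-pair trace distance is at least the overall average pairwise
trace distance `Δ`. -/
theorem exists_pairing_avg_dist (m d : ℕ) (hm : 1 ≤ m) (hd : 0 < d)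
    (σ : (Fin m → Bool) → Matrix (Fin d) (Fin d) ℂ)
    (hσ : ∀ x, IsDensityMatrix (σ x)) :
    ∃ f : (Fin m → Bool) → (Fin m → Bool), Function.Involutive f ∧ (∀ x, f x ≠ x) ∧
      ((2 : ℝ) ^ m)⁻¹ * ∑ x : Fin m → Bool, traceNorm (σ x - σ (f x)) ≥
        ((2 : ℝ) ^ (2 * m))⁻¹ *
          ∑ x₁ : Fin m → Bool, ∑ x₂ : Fin m → Bool, traceNorm (σ x₁ - σ x₂) :=
  exists_pairing_avg_dist_general m d hm σ
end

section
/- Let ρ₁ and ρ₂ be density matrices on ℂ^m, let k ≥ m, and let φ₁ ∈ ℂ^{Fin m × Fin k} be any unit vector whose partial trace over the second factor of |φ₁⟩⟨φ₁| equals ρ₁. Then there exists a unit vector φ₂ ∈ ℂ^{Fin m × Fin k} whose partial trace over the second factor of |φ₂⟩⟨φ₂| equals ρ₂ and such that |⟨φ₁, φ₂⟩|² = F(ρ₁, ρ₂), where ⟨φ₁, φ₂⟩ = ∑_s conj(φ₁(s))·φ₂(s). (Jozsa: the fidelity is achieved by some purification.) -/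
open Matrix BigOperators Kronecker
open scoped ComplexOrder

/-!
Write a purification `φ` of `ρ` as an `m × k` matrix `A` with `A Aᴴ = ρ`; the overlap of two
purifications is then `Tr (A₂ A₁ᴴ)`. Two factorisations `A Aᴴ = B Bᴴ` differ by a unitary on the
right: `Bᴴ x ↦ Aᴴ x` is an isometry between ranges, which extends to the whole space. This gives
polar decompositions `A₁ = √ρ₁ V` with `V Vᴴ = 1` (as `m ≤ k`) and `√ρ₁ √ρ₂ = S U` with
`S = √(√ρ₁ ρ₂ √ρ₁)` and `U` unitary. Then `A₂ = √ρ₂ Uᴴ V` purifies `ρ₂`, and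
`Tr (A₂ A₁ᴴ) = Tr (√ρ₂ Uᴴ √ρ₁) = Tr (S U Uᴴ) = Tr S`.
-/

open scoped MatrixOrder

theorem LinearMap.exists_linearIsometry_comp_eq_of_norm_eq {𝕜 V W : Type*} [RCLike 𝕜]
    [AddCommGroup V] [Module 𝕜 V] [NormedAddCommGroup W] [InnerProductSpace 𝕜 W]
    [FiniteDimensional 𝕜 W] {f g : V →ₗ[𝕜] W} (hfg : ∀ x, ‖f x‖ = ‖g x‖) :
    ∃ T : W →ₗᵢ[𝕜] W, T.toLinearMap ∘ₗ g = f := by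
  have hker : LinearMap.ker g ≤ LinearMap.ker f := fun x hx => by
    rw [LinearMap.mem_ker] at hx ⊢
    rw [← norm_eq_zero, hfg, hx, norm_zero]
  let L : LinearMap.range g →ₗ[𝕜] W :=
    (LinearMap.ker g).liftQ f hker ∘ₗ g.quotKerEquivRange.symm
  have hL : ∀ x, L ⟨g x, LinearMap.mem_range_self g x⟩ = f x := fun x => by simp [L]
  let T : LinearMap.range g →ₗᵢ[𝕜] W := ⟨L, by
    rintro ⟨_, x, rfl⟩
    rw [hL, hfg, Submodule.coe_norm]⟩
  exact ⟨T.extend, LinearMap.ext fun x => (T.extend_apply ⟨g x, _⟩).trans (hL x)⟩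

namespace Matrix

variable {𝕜 m n : Type*} [RCLike 𝕜] [Fintype m] [Fintype n] [DecidableEq m]

theorem inner_toEuclideanLin_conjTranspose_self (C : Matrix m n 𝕜) (x : EuclideanSpace 𝕜 m) :
    inner 𝕜 (toEuclideanLin Cᴴ x) (toEuclideanLin Cᴴ x) =
      star x.ofLp ⬝ᵥ (C * Cᴴ) *ᵥ x.ofLp := by
  rw [EuclideanSpace.inner_eq_star_dotProduct, dotProduct_comm]
  simp [star_mulVec, dotProduct_mulVec]

variable [DecidableEq n]

theorem exists_mem_unitaryGroup_eq_mul_of_mul_conjTranspose_eq {A B : Matrix m n 𝕜}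
    (h : A * Aᴴ = B * Bᴴ) : ∃ U ∈ unitaryGroup n 𝕜, A = B * U := by
  have hnorm : ∀ x, ‖toEuclideanLin Aᴴ x‖ = ‖toEuclideanLin Bᴴ x‖ := fun x => by
    rw [norm_eq_sqrt_re_inner (𝕜 := 𝕜), norm_eq_sqrt_re_inner (𝕜 := 𝕜),
      inner_toEuclideanLin_conjTranspose_self, inner_toEuclideanLin_conjTranspose_self, h]
  obtain ⟨T, hT⟩ := LinearMap.exists_linearIsometry_comp_eq_of_norm_eq hnorm
  let b := EuclideanSpace.basisFun n 𝕜
  let b' := EuclideanSpace.basisFun m 𝕜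
  have hM := (T.toLinearIsometryEquiv rfl).toMatrix_mem_unitaryGroup b b
  refine ⟨star (LinearMap.toMatrix b.toBasis b.toBasis T.toLinearMap), Unitary.star_mem hM, ?_⟩
  have hMB := congrArg (LinearMap.toMatrix b'.toBasis b.toBasis) hT
  rw [toEuclideanLin_eq_toLin_orthonormal, LinearMap.toMatrix_comp _ b.toBasis,
    LinearMap.toMatrix_toLin, LinearMap.toMatrix_toLin] at hMB
  rw [star_eq_conjTranspose, ← conjTranspose_conjTranspose A, ← hMB, conjTranspose_mul,
    conjTranspose_conjTranspose]

theorem exists_eq_sqrt_mul_of_card_le (hmn : Fintype.card m ≤ Fintype.card n)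
    (A : Matrix m n 𝕜) : ∃ V : Matrix m n 𝕜, V * Vᴴ = 1 ∧ A = CFC.sqrt (A * Aᴴ) * V := by
  obtain ⟨e⟩ := Function.Embedding.nonempty_of_card_le hmn
  let J : Matrix m n 𝕜 := (1 : Matrix n n 𝕜).submatrix e id
  have hJ : J * Jᴴ = 1 := by
    rw [conjTranspose_submatrix, conjTranspose_one,
      ← submatrix_mul _ _ _ _ _ Function.bijective_id, Matrix.one_mul]
    exact submatrix_one_embedding e
  set R := CFC.sqrt (A * Aᴴ)
  have hR : Rᴴ = R := (CFC.sqrt_nonneg _).posSemidef.1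
  have hRR : R * R = A * Aᴴ :=
    CFC.sqrt_mul_sqrt_self _ (posSemidef_self_mul_conjTranspose A).nonneg
  obtain ⟨U, hU, hAU⟩ := exists_mem_unitaryGroup_eq_mul_of_mul_conjTranspose_eq (A := A)
    (B := R * J) (by
      rw [conjTranspose_mul, hR, Matrix.mul_assoc, ← Matrix.mul_assoc J, hJ, Matrix.one_mul, hRR])
  refine ⟨J * U, ?_, by rw [hAU, Matrix.mul_assoc]⟩
  rw [conjTranspose_mul, Matrix.mul_assoc, ← Matrix.mul_assoc U, ← star_eq_conjTranspose,
    mem_unitaryGroup_iff.mp hU, Matrix.one_mul, hJ]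

theorem exists_mul_conjTranspose_eq_and_trace_eq_trace_sqrt
    (hmn : Fintype.card m ≤ Fintype.card n) (A₁ : Matrix m n 𝕜) {ρ₂ : Matrix m m 𝕜}
    (h₂ : ρ₂.PosSemidef) :
    ∃ A₂ : Matrix m n 𝕜, A₂ * A₂ᴴ = ρ₂ ∧ (A₂ * A₁ᴴ).trace =
      (CFC.sqrt (CFC.sqrt (A₁ * A₁ᴴ) * ρ₂ * CFC.sqrt (A₁ * A₁ᴴ))).trace := by
  set R₁ := CFC.sqrt (A₁ * A₁ᴴ)
  set R₂ := CFC.sqrt ρ₂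
  have hR₁ : R₁ᴴ = R₁ := (CFC.sqrt_nonneg _).posSemidef.1
  have hR₂ : R₂ᴴ = R₂ := (CFC.sqrt_nonneg _).posSemidef.1
  have hR₂R₂ : R₂ * R₂ = ρ₂ := CFC.sqrt_mul_sqrt_self _ h₂.nonneg
  obtain ⟨V, hV, hA₁⟩ := exists_eq_sqrt_mul_of_card_le hmn A₁
  obtain ⟨U, hU, hR₁R₂⟩ := exists_eq_sqrt_mul_of_card_le le_rfl (R₁ * R₂)
  have hU' : Uᴴ * U = 1 := mul_eq_one_comm.mp hU
  rw [conjTranspose_mul, hR₁, hR₂, Matrix.mul_assoc, ← Matrix.mul_assoc R₂, hR₂R₂,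
    ← Matrix.mul_assoc] at hR₁R₂
  refine ⟨R₂ * Uᴴ * V, ?_, ?_⟩
  · simp only [conjTranspose_mul, conjTranspose_conjTranspose, hR₂, Matrix.mul_assoc]
    rw [← Matrix.mul_assoc V, hV, Matrix.one_mul, ← Matrix.mul_assoc Uᴴ, hU', Matrix.one_mul,
      hR₂R₂]
  · calc (R₂ * Uᴴ * V * A₁ᴴ).trace = (R₂ * Uᴴ * (V * Vᴴ) * R₁).trace := by
          rw [hA₁, conjTranspose_mul, hR₁]; simp only [Matrix.mul_assoc]
      _ = (R₁ * R₂ * Uᴴ).trace := by rw [hV, Matrix.mul_one, trace_mul_cycle]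
      _ = _ := by rw [hR₁R₂, Matrix.mul_assoc, hU, Matrix.mul_one]

end Matrix

theorem msqrt_eq_cfc_sqrt {d : Type*} [Fintype d] [DecidableEq d] {A : Matrix d d ℂ}
    (hA : A.PosSemidef) : msqrt A = CFC.sqrt A := by
  rw [CFC.sqrt_eq_real_sqrt A hA.nonneg, cfcₙ_eq_cfc (hf0 := Real.sqrt_zero), hA.1.cfc_eq,
    IsHermitian.cfc, msqrt, dif_pos hA, Unitary.conjStarAlgAut_apply]
  rfl

theorem fidelity_eq_norm_trace_sq {d : Type*} [Fintype d] [DecidableEq d]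
    {ρ₁ ρ₂ : Matrix d d ℂ} (h₁ : ρ₁.PosSemidef) (h₂ : ρ₂.PosSemidef) :
    fidelity ρ₁ ρ₂ = ‖(CFC.sqrt (CFC.sqrt ρ₁ * ρ₂ * CFC.sqrt ρ₁)).trace‖ ^ 2 := by
  have hR : (CFC.sqrt ρ₁)ᴴ = CFC.sqrt ρ₁ := (CFC.sqrt_nonneg _).posSemidef.1
  have hS : (CFC.sqrt ρ₁ * ρ₂ * CFC.sqrt ρ₁).PosSemidef := by
    have := h₂.conjTranspose_mul_mul_same (CFC.sqrt ρ₁)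
    rwa [hR] at this
  have htr : 0 ≤ (CFC.sqrt (CFC.sqrt ρ₁ * ρ₂ * CFC.sqrt ρ₁)).trace :=
    (CFC.sqrt_nonneg _).posSemidef.trace_nonneg
  rw [fidelity, msqrt_eq_cfc_sqrt h₁, msqrt_eq_cfc_sqrt hS, Complex.re_eq_norm.mpr htr]

theorem ptraceSnd_vecMulVec_star {m k : ℕ} (A : Matrix (Fin m) (Fin k) ℂ) :
    ptraceSnd (vecMulVec (fun s => A s.1 s.2) (star fun s => A s.1 s.2)) = A * Aᴴ := by
  ext i j
  simp [ptraceSnd, vecMulVec_apply, mul_apply]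

theorem sum_starRingEnd_mul_eq_trace {𝕜 m n : Type*} [RCLike 𝕜] [Fintype m] [Fintype n]
    (A B : Matrix m n 𝕜) :
    ∑ s : m × n, starRingEnd 𝕜 (A s.1 s.2) * B s.1 s.2 = (B * Aᴴ).trace := by
  simp [trace, mul_apply, Fintype.sum_prod_type, mul_comm]

theorem jozsa_fidelity_achieved_general (m k : ℕ) (hmk : m ≤ k)
    (ρ₁ ρ₂ : Matrix (Fin m) (Fin m) ℂ)
    (h₂ : IsDensityMatrix ρ₂)
    (φ₁ : Fin m × Fin k → ℂ)
    (hp₁ : ptraceSnd (Matrix.vecMulVec φ₁ (star φ₁)) = ρ₁) :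
    ∃ φ₂ : Fin m × Fin k → ℂ, (∑ s, ‖φ₂ s‖ ^ 2 = 1) ∧
      ptraceSnd (Matrix.vecMulVec φ₂ (star φ₂)) = ρ₂ ∧
      ‖∑ s, (starRingEnd ℂ) (φ₁ s) * φ₂ s‖ ^ 2 = fidelity ρ₁ ρ₂ := by
  obtain ⟨A₁, rfl⟩ : ∃ A₁ : Matrix (Fin m) (Fin k) ℂ, φ₁ = fun s => A₁ s.1 s.2 :=
    ⟨of (Function.curry φ₁), rfl⟩
  rw [ptraceSnd_vecMulVec_star] at hp₁
  subst hp₁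
  obtain ⟨A₂, hA₂, htr⟩ :=
    exists_mul_conjTranspose_eq_and_trace_eq_trace_sqrt (by simpa using hmk) A₁ h₂.1
  refine ⟨fun s => A₂ s.1 s.2, ?_, by rw [ptraceSnd_vecMulVec_star, hA₂], ?_⟩
  · have hnorm := sum_starRingEnd_mul_eq_trace A₂ A₂
    simp_rw [Complex.conj_mul', hA₂, h₂.2] at hnorm
    exact_mod_cast hnorm
  · rw [sum_starRingEnd_mul_eq_trace, htr,
      fidelity_eq_norm_trace_sq (posSemidef_self_mul_conjTranspose A₁) h₂.1]

/-- **Jozsa.** Given any purification `φ₁` of `ρ₁`, the fidelity `F(ρ₁, ρ₂)` is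
achieved by some purification `φ₂` of `ρ₂` in the same space. -/
theorem jozsa_fidelity_achieved (m k : ℕ) (hmk : m ≤ k)
    (ρ₁ ρ₂ : Matrix (Fin m) (Fin m) ℂ)
    (h₁ : IsDensityMatrix ρ₁) (h₂ : IsDensityMatrix ρ₂)
    (φ₁ : Fin m × Fin k → ℂ) (hφ₁ : ∑ s, ‖φ₁ s‖ ^ 2 = 1)
    (hp₁ : ptraceSnd (Matrix.vecMulVec φ₁ (star φ₁)) = ρ₁) :
    ∃ φ₂ : Fin m × Fin k → ℂ, (∑ s, ‖φ₂ s‖ ^ 2 = 1) ∧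
      ptraceSnd (Matrix.vecMulVec φ₂ (star φ₂)) = ρ₂ ∧
      ‖∑ s, (starRingEnd ℂ) (φ₁ s) * φ₂ s‖ ^ 2 = fidelity ρ₁ ρ₂ :=
  jozsa_fidelity_achieved_general m k hmk ρ₁ ρ₂ h₂ φ₁ hp₁
end

section
/- Let ρ₁ and ρ₂ be density matrices on ℂ^d. (i) For every POVM (E_t)_{t ∈ T} on ℂ^d (a finite family of positive semidefinite matrices summing to the identity), ∑_{t ∈ T} |Re Tr(E_t·ρ₁) − Re Tr(E_t·ρ₂)| ≤ ‖ρ₁ − ρ₂‖₁. (ii) Moreover, the bound is tight: there exists a positive semidefinite matrix E with E ≤ I (i.e., I − E positive semidefinite) such that 2·(Re Tr(E·ρ₁) − Re Tr(E·ρ₂)) = ‖ρ₁ − ρ₂‖₁. (Optimality of the trace norm for distinguishing density matrices.) -/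
open Matrix BigOperators Kronecker
open scoped ComplexOrder

/-! The trace norm of `Δ = ρ₁ - ρ₂` is `Tr |Δ|`, and `Δ = Δ⁺ - Δ⁻`, `|Δ| = Δ⁺ + Δ⁻` with `Δ⁺, Δ⁻ ≥ 0`.
For `E ≥ 0` both `Tr (E Δ⁺)` and `Tr (E Δ⁻)` are nonnegative, so `|Tr (E Δ)| ≤ Tr (E |Δ|)`, and these
bounds add up over a POVM to `Tr |Δ|`. Conversely, the spectral projection `P` of `Δ` onto its
positive eigenvalues has `P Δ = Δ⁺`, and `2 Tr Δ⁺ = Tr |Δ| + Tr Δ = Tr |Δ|` because `Tr Δ = 0`. -/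

namespace Matrix

open scoped MatrixOrder

variable {n : Type*} [Fintype n] [DecidableEq n]

lemma msqrt_eq_sqrt {A : Matrix n n ℂ} (hA : A.PosSemidef) : msqrt A = CFC.sqrt A := by
  rw [msqrt, dif_pos hA, CFC.sqrt_eq_real_sqrt A hA.nonneg, cfcₙ_eq_cfc, hA.1.cfc_eq]
  rfl

lemma traceNorm_eq_re_trace_abs (A : Matrix n n ℂ) : traceNorm A = (CFC.abs A).trace.re := by
  rw [traceNorm, msqrt_eq_sqrt (posSemidef_conjTranspose_mul_self A)]
  rfl

lemma PosSemidef.trace_mul_nonneg {A B : Matrix n n ℂ} (hA : A.PosSemidef) (hB : B.PosSemidef) :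
    0 ≤ (A * B).trace := by
  obtain ⟨S, hS, rfl⟩ := CStarAlgebra.nonneg_iff_exists_isSelfAdjoint_and_eq_mul_self.mp hB.nonneg
  have hSAS := hA.conjTranspose_mul_mul_same S
  rw [← star_eq_conjTranspose, hS.star_eq] at hSAS
  rw [← mul_assoc, trace_mul_cycle]
  exact hSAS.trace_nonneg

lemma IsHermitian.abs_re_trace_mul_le {E A : Matrix n n ℂ} (hE : E.PosSemidef) (hA : A.IsHermitian) :
    |(E * A).trace.re| ≤ (E * CFC.abs A).trace.re := by
  have hpos := Complex.nonneg_iff.mp (hE.trace_mul_nonneg (CFC.posPart_nonneg A).posSemidef)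
  have hneg := Complex.nonneg_iff.mp (hE.trace_mul_nonneg (CFC.negPart_nonneg A).posSemidef)
  conv_lhs => rw [← CFC.posPart_sub_negPart A hA.isSelfAdjoint]
  rw [← CFC.posPart_add_negPart A hA.isSelfAdjoint,
    mul_sub, mul_add, trace_sub, trace_add, Complex.sub_re, Complex.add_re]
  exact abs_le.mpr ⟨by linarith, by linarith⟩

theorem IsHermitian.sum_abs_re_trace_mul_le_traceNorm {T : Type*} [Fintype T]
    {E : T → Matrix n n ℂ} (hE : ∀ t, (E t).PosSemidef) (hE1 : ∑ t, E t = 1)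
    {A : Matrix n n ℂ} (hA : A.IsHermitian) :
    ∑ t, |(E t * A).trace.re| ≤ traceNorm A := calc
  ∑ t, |(E t * A).trace.re| ≤ ∑ t, (E t * CFC.abs A).trace.re :=
    Finset.sum_le_sum fun t _ => hA.abs_re_trace_mul_le (hE t)
  _ = traceNorm A := by
    rw [traceNorm_eq_re_trace_abs, ← Complex.re_sum, ← trace_sum, ← Finset.sum_mul, hE1, one_mul]

lemma IsHermitian.exists_mul_eq_posPart {A : Matrix n n ℂ} (hA : A.IsHermitian) :
    ∃ P : Matrix n n ℂ, P.PosSemidef ∧ (1 - P).PosSemidef ∧ P * A = A⁺ := by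
  have hcont := A.finite_real_spectrum.continuousOn fun x : ℝ => if 0 < x then (1 : ℝ) else 0
  refine ⟨cfc (fun x : ℝ => if 0 < x then (1 : ℝ) else 0) A, ?_, ?_, ?_⟩
  · exact (cfc_nonneg fun x _ => by split_ifs <;> norm_num).posSemidef
  · exact (sub_nonneg.mpr (cfc_le_one _ A fun x _ => by split_ifs <;> norm_num)).posSemidef
  · nth_rw 2 [← cfc_id' ℝ A hA.isSelfAdjoint]
    rw [← cfc_mul _ _ A hcont, CFC.posPart_def, cfcₙ_eq_cfc]
    refine cfc_congr fun x _ => ?_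
    split_ifs with hx
    · simp [hx.le]
    · simp [posPart_eq_zero.mpr (not_lt.mp hx)]

lemma IsHermitian.two_mul_re_trace_posPart {A : Matrix n n ℂ} (hA : A.IsHermitian) :
    2 * (A⁺).trace.re = traceNorm A + A.trace.re := by
  rw [traceNorm_eq_re_trace_abs, ← Complex.add_re, ← trace_add, CFC.abs_add_self A hA.isSelfAdjoint,
    two_nsmul, trace_add, Complex.add_re, two_mul]

end Matrix

/-- The trace norm bounds the statistical distance of the outcome distributions of
any POVM applied to two density matrices, and the bound is achieved by a
two-outcome measurement. -/
theorem traceNorm_distinguishability (d : ℕ) (ρ₁ ρ₂ : Matrix (Fin d) (Fin d) ℂ)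
    (h₁ : IsDensityMatrix ρ₁) (h₂ : IsDensityMatrix ρ₂) :
    (∀ (T : Type) [Fintype T], ∀ E : T → Matrix (Fin d) (Fin d) ℂ,
      (∀ t, (E t).PosSemidef) → (∑ t, E t = 1) →
      ∑ t, |((E t * ρ₁).trace).re - ((E t * ρ₂).trace).re| ≤ traceNorm (ρ₁ - ρ₂)) ∧
    (∃ E : Matrix (Fin d) (Fin d) ℂ, E.PosSemidef ∧ (1 - E).PosSemidef ∧
      2 * (((E * ρ₁).trace).re - ((E * ρ₂).trace).re) = traceNorm (ρ₁ - ρ₂)) := by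
  have hΔ : (ρ₁ - ρ₂).IsHermitian := h₁.1.1.sub h₂.1.1
  have hdiff (M : Matrix (Fin d) (Fin d) ℂ) :
      (M * ρ₁).trace.re - (M * ρ₂).trace.re = (M * (ρ₁ - ρ₂)).trace.re := by
    rw [mul_sub, trace_sub, Complex.sub_re]
  refine ⟨fun T _ E hE hE1 => ?_, ?_⟩
  · simpa only [hdiff] using hΔ.sum_abs_re_trace_mul_le_traceNorm hE hE1
  · obtain ⟨P, hP, hP1, hPΔ⟩ := hΔ.exists_mul_eq_posPart
    have htr : (ρ₁ - ρ₂).trace = 0 := by rw [trace_sub, h₁.2, h₂.2, sub_self]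
    refine ⟨P, hP, hP1, ?_⟩
    rw [hdiff, hPΔ, hΔ.two_mul_re_trace_posPart, htr, Complex.zero_re, add_zero]
end
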